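/- arXiv:2106.07394 — 5 statements merged into one kernel-verified Lean document; each statement's English description precedes it below -/
import Mathlib

section
/- Let p_0,...,p_{M+1} be real polynomials with p_0 = 1 satisfying p_{k+1}(x) = (x - b_k)p_k(x) - λ_k p_{k-1}(x) with all λ_k > 0 for 1 ≤ k ≤ M, and suppose p_{M+1} has M+1 distinct real roots e_0 > e_1 > ... > e_M. Then for each j, p_M(e_j) ≠ 0 and the sign of p_M(e_j) equals (-1)^j. -/
lemma prod_neg_aux {α : Type*} (s : Finset α) (f : α → ℝ) :
    ∏ i ∈ s, -f i = (-1) ^ s.card * ∏ i ∈ s, f i := by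
  induction s using Finset.cons_induction with
  | empty => simp
  | cons a s ha ih =>
      rw [Finset.prod_cons, Finset.prod_cons, ih, Finset.card_cons, pow_succ]
      ring

/-- If `p_{M+1}` from a monic three-term recurrence with positive `λ_k` has distinct real
roots `e_0 > e_1 > ⋯ > e_M`, then `p_M(e_j) ≠ 0` and `sign (p_M(e_j)) = (-1)^j`. -/
theorem sign_pM_at_roots (M : ℕ) (p : ℕ → Polynomial ℝ) (b lam : ℕ → ℝ)
    (hp0 : p 0 = 1)
    (hp1 : p 1 = Polynomial.X - Polynomial.C (b 0))
    (hrec : ∀ k, 1 ≤ k → k ≤ M →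
      p (k + 1) = (Polynomial.X - Polynomial.C (b k)) * p k - Polynomial.C (lam k) * p (k - 1))
    (hlam : ∀ k, 1 ≤ k → k ≤ M → 0 < lam k)
    (e : Fin (M + 1) → ℝ) (he : StrictAnti e)
    (hfact : p (M + 1) = ∏ j : Fin (M + 1), (Polynomial.X - Polynomial.C (e j))) :
    ∀ j : Fin (M + 1), (p M).eval (e j) ≠ 0 ∧ 0 < (-1 : ℝ) ^ (j : ℕ) * (p M).eval (e j) := by
  -- Wronskian positivity
  have hW : ∀ n, n ≤ M → ∀ x : ℝ,
      0 < (p (n+1)).derivative.eval x * (p n).eval x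
          - (p n).derivative.eval x * (p (n+1)).eval x := by
    intro n
    induction n with
    | zero => intro _ x; simp [hp0, hp1]
    | succ m ih =>
      intro hm x
      have hmM : m ≤ M := le_trans (Nat.le_succ m) hm
      have h1 : 1 ≤ m + 1 := Nat.le_add_left 1 m
      have hrec' : p (m + 2) =
          (Polynomial.X - Polynomial.C (b (m+1))) * p (m+1)
            - Polynomial.C (lam (m+1)) * p m := by
        simpa using hrec (m+1) h1 hm
      have hd : (p (m+2)).derivative =
          p (m+1) + (Polynomial.X - Polynomial.C (b (m+1))) * (p (m+1)).derivative
            - Polynomial.C (lam (m+1)) * (p m).derivative := by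
        rw [hrec']
        simp [Polynomial.derivative_mul]
      have ihx := ih hmM x
      have hl := hlam (m+1) h1 hm
      have key : (p (m+2)).derivative.eval x * (p (m+1)).eval x
          - (p (m+1)).derivative.eval x * (p (m+2)).eval x
          = (p (m+1)).eval x ^ 2 +
            lam (m+1) * ((p (m+1)).derivative.eval x * (p m).eval x
              - (p m).derivative.eval x * (p (m+1)).eval x) := by
        rw [hd, hrec']
        simp only [Polynomial.eval_add, Polynomial.eval_sub, Polynomial.eval_mul,
          Polynomial.eval_X, Polynomial.eval_C]
        ring
      rw [key]
      nlinarith [sq_nonneg ((p (m+1)).eval x)]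
  intro j
  -- factor out the root e j
  set q : Polynomial ℝ :=
    ∏ l ∈ Finset.univ.erase j, (Polynomial.X - Polynomial.C (e l)) with hq
  have hfact' : p (M + 1) = (Polynomial.X - Polynomial.C (e j)) * q := by
    rw [hfact, ← Finset.mul_prod_erase _ _ (Finset.mem_univ j)]
  have hpzero : (p (M+1)).eval (e j) = 0 := by simp [hfact']
  have hderiv : (p (M+1)).derivative.eval (e j) = q.eval (e j) := by
    rw [hfact']
    simp [Polynomial.derivative_mul]
  have hqeval : q.eval (e j) = ∏ l ∈ Finset.univ.erase j, (e j - e l) := by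
    rw [hq, Polynomial.eval_prod]
    simp
  -- sign of the derivative
  have herase : Finset.univ.erase j = Finset.Iio j ∪ Finset.Ioi j := by
    ext l
    simp only [Finset.mem_erase, Finset.mem_univ, and_true, Finset.mem_union,
      Finset.mem_Iio, Finset.mem_Ioi]
    exact ne_iff_lt_or_gt
  have hdisj : Disjoint (Finset.Iio j) (Finset.Ioi j) := by
    rw [Finset.disjoint_left]
    intro a ha ha'
    simp only [Finset.mem_Iio] at ha
    simp only [Finset.mem_Ioi] at ha'
    exact absurd (ha.trans ha') (lt_irrefl a)
  have hsplit : ∏ l ∈ Finset.univ.erase j, (e j - e l)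
      = (∏ l ∈ Finset.Iio j, (e j - e l)) * ∏ l ∈ Finset.Ioi j, (e j - e l) := by
    rw [herase, Finset.prod_union hdisj]
  have hIoi : 0 < ∏ l ∈ Finset.Ioi j, (e j - e l) :=
    Finset.prod_pos fun l hl => sub_pos.mpr (he (Finset.mem_Ioi.mp hl))
  have hIio : 0 < (-1 : ℝ) ^ (j : ℕ) * ∏ l ∈ Finset.Iio j, (e j - e l) := by
    have h1 : ∏ l ∈ Finset.Iio j, (e l - e j)
        = (-1) ^ (Finset.Iio j).card * ∏ l ∈ Finset.Iio j, (e j - e l) := by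
      rw [← prod_neg_aux]
      simp
    have hcard : (Finset.Iio j).card = (j : ℕ) := Fin.card_Iio j
    rw [← hcard, ← h1]
    exact Finset.prod_pos fun l hl => sub_pos.mpr (he (Finset.mem_Iio.mp hl))
  have hdsign : 0 < (-1 : ℝ) ^ (j : ℕ) * (p (M+1)).derivative.eval (e j) := by
    rw [hderiv, hqeval, hsplit]
    calc (0:ℝ) < ((-1 : ℝ) ^ (j : ℕ) * ∏ l ∈ Finset.Iio j, (e j - e l))
          * ∏ l ∈ Finset.Ioi j, (e j - e l) := mul_pos hIio hIoi
      _ = _ := by ring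
  -- combine
  have hWj := hW M le_rfl (e j)
  rw [hpzero, mul_zero, sub_zero] at hWj
  have hfinal : 0 < (-1 : ℝ) ^ (j : ℕ) * (p M).eval (e j) := by
    nlinarith [mul_pos hdsign hWj, sq_nonneg ((p (M+1)).derivative.eval (e j)),
      sq_nonneg ((-1 : ℝ) ^ (j : ℕ))]
  refine ⟨fun h0 => ?_, hfinal⟩
  rw [h0, mul_zero] at hfinal
  exact lt_irrefl 0 hfinal
end

section
/- Let H be a real (M+1)×(M+1) centrosymmetric matrix (J H J = H with J the exchange matrix) with simple spectrum e_0 > e_1 > ... > e_M, whose off-diagonal structure is tridiagonal with positive sub- and superdiagonal entries. Then the eigenvector v^{(j)} of e_j normalized to have first component 1 satisfies J v^{(j)} = (-1)^j v^{(j)}. -/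
section CentroAux
open Polynomial Matrix Finset

lemma myProdNeg {ι : Type*} (s : Finset ι) (f : ι → ℝ) :
    ∏ i ∈ s, (-f i) = (-1) ^ s.card * ∏ i ∈ s, f i := by
  calc ∏ i ∈ s, (-f i) = ∏ i ∈ s, ((-1) * f i) := by simp
  _ = _ := by rw [Finset.prod_mul_distrib, Finset.prod_const]

/-- kernel uniqueness for tridiagonal with nonzero superdiagonal -/
lemma triKer (M : ℕ) (T : Matrix (Fin (M + 1)) (Fin (M + 1)) ℝ)
    (htri : ∀ i j : Fin (M + 1),
      (i : ℕ) ≠ (j : ℕ) → (i : ℕ) ≠ (j : ℕ) + 1 → (j : ℕ) ≠ (i : ℕ) + 1 → T i j = 0)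
    (hsup : ∀ i j : Fin (M + 1), (j : ℕ) = (i : ℕ) + 1 → T i j ≠ 0)
    (ev : ℝ) (u : Fin (M + 1) → ℝ) (hu : T.mulVec u = ev • u) (h0 : u 0 = 0) :
    u = 0 := by
  have key : ∀ n : ℕ, ∀ h : n < M + 1, u ⟨n, h⟩ = 0 := by
    intro n
    induction n using Nat.strong_induction_on with
    | _ n ih =>
      match n with
      | 0 => intro h; exact h0
      | (m+1) =>
        intro h
        have hm : m < M + 1 := by omega
        have hrow : ∑ k, T ⟨m, hm⟩ k * u k = ev * u ⟨m, hm⟩ := by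
          have := congrFun hu ⟨m, hm⟩
          simpa [Matrix.mulVec, dotProduct] using this
        have hz : u ⟨m, hm⟩ = 0 := ih m (by omega) hm
        have hsum : ∑ k, T ⟨m, hm⟩ k * u k = T ⟨m, hm⟩ ⟨m+1, h⟩ * u ⟨m+1, h⟩ := by
          apply Finset.sum_eq_single
          · intro k _ hk
            rcases le_or_gt (k : ℕ) m with hle | hlt
            · have : u k = 0 := by
                have := ih (k : ℕ) (by omega) k.isLt
                simpa [Fin.eta] using this
              simp [this]
            · have hk2 : (m : ℕ) + 2 ≤ (k : ℕ) := by
                rcases Nat.lt_or_ge (k : ℕ) (m + 2) with h1 | h1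
                · exfalso; apply hk; apply Fin.ext; simp; omega
                · exact h1
              have : T ⟨m, hm⟩ k = 0 := by
                apply htri <;> simp <;> omega
              simp [this]
          · intro hmem; exact absurd (Finset.mem_univ _) hmem
        have := hsum ▸ hrow
        have hne : T ⟨m, hm⟩ ⟨m+1, h⟩ ≠ 0 := hsup _ _ (by simp)
        have : T ⟨m, hm⟩ ⟨m+1, h⟩ * u ⟨m+1, h⟩ = 0 := by rw [this, hz]; ring
        exact (mul_eq_zero.mp this).resolve_left hne
  funext i
  have := key i.val i.isLt
  simpa [Fin.eta] using this

lemma triUnique (M : ℕ) (T : Matrix (Fin (M + 1)) (Fin (M + 1)) ℝ)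
    (htri : ∀ i j : Fin (M + 1),
      (i : ℕ) ≠ (j : ℕ) → (i : ℕ) ≠ (j : ℕ) + 1 → (j : ℕ) ≠ (i : ℕ) + 1 → T i j = 0)
    (hsup : ∀ i j : Fin (M + 1), (j : ℕ) = (i : ℕ) + 1 → T i j ≠ 0)
    (ev : ℝ) (u v : Fin (M + 1) → ℝ) (hu : T.mulVec u = ev • u)
    (hv : T.mulVec v = ev • v) (hv0 : v 0 = 1) : u = u 0 • v := by
  have h := triKer M T htri hsup ev (u - u 0 • v) ?_ ?_
  · funext i
    have := congrFun h i
    simp only [Pi.sub_apply, Pi.smul_apply, smul_eq_mul, Pi.zero_apply] at this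
    have : u i = u 0 * v i := by linarith
    simpa using this
  · rw [Matrix.mulVec_sub, Matrix.mulVec_smul, hu, hv]
    funext i; simp; ring
  · simp [hv0]

lemma JmulVec (M : ℕ) (J : Matrix (Fin (M + 1)) (Fin (M + 1)) ℝ)
    (hJ : J = Matrix.of fun i j : Fin (M + 1) => if (i : ℕ) + (j : ℕ) = M then (1 : ℝ) else 0)
    (u : Fin (M + 1) → ℝ) : J.mulVec u = fun i => u i.rev := by
  funext i
  have : J.mulVec u i = ∑ k, J i k * u k := rfl
  rw [this]
  rw [Finset.sum_eq_single i.rev]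
  · have hc : (i : ℕ) + (i.rev : ℕ) = M := by
      have := i.isLt; simp [Fin.val_rev]; omega
    simp only [hJ, Matrix.of_apply]
    rw [if_pos hc, one_mul]
  · intro k _ hk
    have : ¬ ((i : ℕ) + (k : ℕ) = M) := by
      intro hc
      apply hk; apply Fin.ext
      have := i.isLt; have := k.isLt
      simp [Fin.val_rev]; omega
    simp [hJ, this]
  · intro h; exact absurd (Finset.mem_univ _) h

lemma adjFacts (M : ℕ) (H : Matrix (Fin (M + 1)) (Fin (M + 1)) ℝ)
    (e : Fin (M + 1) → ℝ)
    (hchar : H.charpoly = ∏ j : Fin (M + 1), (Polynomial.X - Polynomial.C (e j)))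
    (j : Fin (M + 1)) (v : Fin (M + 1) → ℝ) (hv : H.mulVec v = e j • v) :
    ((e j • 1 - H).adjugate) * (e j • 1 - H) = 0 ∧
    (e j • 1 - H).adjugate.mulVec v
      = (∏ i ∈ Finset.univ.erase j, (e j - e i)) • v := by
  set B : Matrix (Fin (M + 1)) (Fin (M + 1)) ℝ := e j • 1 - H with hB
  set P : Matrix (Fin (M + 1)) (Fin (M + 1)) ℝ[X] :=
    (X + C (e j)) • 1 - H.map C with hP
  set f : ℝ[X] →+* ℝ := evalRingHom 0 with hf
  -- (1) mapping P at 0 gives B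
  have hPmap : P.map f = B := by
    ext i k
    by_cases h : i = k <;>
      simp [hP, hB, Matrix.map_apply, Matrix.one_apply, h, Matrix.sub_apply,
        Matrix.smul_apply, hf]
  -- (2) determinant of P
  have hdetP : P.det = ∏ i : Fin (M + 1), (X + C (e j) - C (e i)) := by
    have hφ : (charmatrix H).map (aeval (X + C (e j)) : ℝ[X] →ₐ[ℝ] ℝ[X]) = P := by
      ext i k
      by_cases h : i = k
      · subst h
        simp [charmatrix_apply_eq, hP, Matrix.one_apply, Matrix.sub_apply,
          Matrix.smul_apply, Matrix.map_apply, algebraMap_eq]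
      · simp [charmatrix_apply_ne _ _ _ h, hP, Matrix.one_apply, h, Matrix.sub_apply,
          Matrix.smul_apply, Matrix.map_apply, algebraMap_eq]
    calc P.det = ((charmatrix H).map (aeval (X + C (e j)) : ℝ[X] →ₐ[ℝ] ℝ[X])).det := by
          rw [hφ]
    _ = aeval (X + C (e j)) (charmatrix H).det := ((aeval (X + C (e j)) : ℝ[X] →ₐ[ℝ] ℝ[X]).map_det _).symm
    _ = aeval (X + C (e j)) H.charpoly := rfl
    _ = ∏ i : Fin (M + 1), (X + C (e j) - C (e i)) := by
        rw [hchar, map_prod]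
        refine Finset.prod_congr rfl fun i _ => ?_
        simp [algebraMap_eq]
  -- (3) det B = 0
  have hdetB : B.det = 0 := by
    have : B.det = f P.det := by rw [← hPmap]; exact (RingHom.map_det f P).symm
    rw [this, hdetP, map_prod]
    refine Finset.prod_eq_zero (Finset.mem_univ j) ?_
    simp [hf]
  -- (4) P acts on C ∘ v
  have hHCv : (H.map C).mulVec (fun k => C (v k)) = fun i => C (e j * v i) := by
    funext i
    have h1 : (H.map C).mulVec (fun k => C (v k)) i
        = ∑ k, C (H i k) * C (v k) := rfl
    rw [h1]
    have h2 : ∑ k, C (H i k) * C (v k) = C (∑ k, H i k * v k) := by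
      rw [map_sum]
      exact Finset.sum_congr rfl fun k _ => (map_mul C _ _).symm
    rw [h2]
    congr 1
    have := congrFun hv i
    simpa [Matrix.mulVec, dotProduct] using this
  have hPv : P.mulVec (fun k => C (v k)) = (X : ℝ[X]) • (fun k => C (v k)) := by
    rw [hP, Matrix.sub_mulVec, Matrix.smul_mulVec, Matrix.one_mulVec, hHCv]
    funext i
    show (X + C (e j)) * C (v i) - C (e j * v i) = X * C (v i)
    rw [C_mul]; ring
  -- (5) split off the zero factor
  set q : ℝ[X] := ∏ i ∈ Finset.univ.erase j, (X + C (e j) - C (e i)) with hq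
  have hdetq : P.det = X * q := by
    rw [hdetP, ← Finset.mul_prod_erase _ _ (Finset.mem_univ j), ← hq]
    simp
  -- (6) adjugate acts on C ∘ v
  have hkey : P.adjugate.mulVec (fun k => C (v k)) = fun i => q * C (v i) := by
    have h2 : P.adjugate.mulVec (P.mulVec (fun k => C (v k)))
        = P.det • (fun k => C (v k)) := by
      rw [Matrix.mulVec_mulVec, Matrix.adjugate_mul, Matrix.smul_mulVec,
        Matrix.one_mulVec]
    rw [hPv, Matrix.mulVec_smul] at h2
    funext i
    have h3 := congrFun h2 i
    simp only [Pi.smul_apply, smul_eq_mul, hdetq] at h3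
    have h4 : X * (P.adjugate.mulVec (fun k => C (v k)) i) = X * (q * C (v i)) := by
      rw [h3]; ring
    exact mul_left_cancel₀ Polynomial.X_ne_zero h4
  -- (7) conclusions over ℝ
  have hadjmap : B.adjugate = (P.adjugate).map f := by
    rw [← hPmap]
    have := (RingHom.map_adjugate f P).symm
    simpa [RingHom.mapMatrix_apply] using this
  constructor
  · rw [Matrix.adjugate_mul, hdetB, zero_smul]
  · funext i
    have h5 : B.adjugate.mulVec v i = ∑ k, f (P.adjugate i k) * v k := by
      rw [hadjmap]; rfl
    rw [h5]
    have h6 : ∑ k, f (P.adjugate i k) * v k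
        = f (∑ k, P.adjugate i k * C (v k)) := by
      rw [map_sum]
      refine Finset.sum_congr rfl fun k _ => ?_
      rw [_root_.map_mul]
      simp [hf]
    rw [h6]
    have h7 : ∑ k, P.adjugate i k * C (v k) = q * C (v i) := by
      have := congrFun hkey i
      simpa [Matrix.mulVec, dotProduct] using this
    rw [h7, _root_.map_mul]
    have h8 : f q = ∏ i ∈ Finset.univ.erase j, (e j - e i) := by
      rw [hq, map_prod]
      refine Finset.prod_congr rfl fun i _ => ?_
      simp [hf]
    rw [h8]
    simp [hf]

lemma adjCorner (M : ℕ) (B : Matrix (Fin (M + 1)) (Fin (M + 1)) ℝ)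
    (hz : ∀ x y : Fin (M + 1), (y : ℕ) + 2 ≤ (x : ℕ) → B x y = 0) :
    B.adjugate (Fin.last M) 0 = (-1 : ℝ) ^ M * ∏ a : Fin M, B a.succ a.castSucc := by
  rw [Matrix.adjugate_apply, Matrix.det_succ_row_zero]
  rw [Finset.sum_eq_single (Fin.last M)]
  · rw [Matrix.updateRow_self]
    rw [Pi.single_eq_same, mul_one]
    have hsub : ∀ a b : Fin M,
        ((B.updateRow 0 (Pi.single (Fin.last M) 1)).submatrix Fin.succ
          (Fin.last M).succAbove) a b = B a.succ b.castSucc := by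
      intro a b
      rw [Matrix.submatrix_apply, Fin.succAbove_last, Matrix.updateRow_ne (Fin.succ_ne_zero a)]
    have htr : ((B.updateRow 0 (Pi.single (Fin.last M) 1)).submatrix Fin.succ
        (Fin.last M).succAbove).BlockTriangular id := by
      intro a b hab
      rw [hsub]
      apply hz
      simp only [Fin.val_succ, Fin.coe_castSucc]
      have : (b : ℕ) < (a : ℕ) := hab
      omega
    rw [Matrix.det_of_upperTriangular htr]
    rw [Fin.val_last]
    congr 1
    exact Finset.prod_congr rfl fun a _ => hsub a a
  · intro b _ hb
    rw [Matrix.updateRow_self, Pi.single_eq_of_ne hb]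
    ring
  · intro h; exact absurd (Finset.mem_univ _) h

lemma signC (M : ℕ) (e : Fin (M + 1) → ℝ) (he : StrictAnti e) (j : Fin (M + 1)) :
    0 < (-1 : ℝ) ^ (j : ℕ) * ∏ i ∈ Finset.univ.erase j, (e j - e i) := by
  have hsplit : Finset.univ.erase j = Finset.Iio j ∪ Finset.Ioi j := by
    ext x
    simp only [Finset.mem_erase, Finset.mem_univ, and_true, Finset.mem_union,
      Finset.mem_Iio, Finset.mem_Ioi]
    exact ne_iff_lt_or_gt
  have hdisj : Disjoint (Finset.Iio j) (Finset.Ioi j) := by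
    rw [Finset.disjoint_left]
    intro a ha hb
    simp only [Finset.mem_Iio] at ha
    simp only [Finset.mem_Ioi] at hb
    exact absurd (ha.trans hb) (lt_irrefl _)
  rw [hsplit, Finset.prod_union hdisj]
  have h1 : ∏ i ∈ Finset.Iio j, (e j - e i)
      = (-1 : ℝ) ^ (j : ℕ) * ∏ i ∈ Finset.Iio j, (e i - e j) := by
    have := myProdNeg (Finset.Iio j) (fun i => e i - e j)
    simp only [neg_sub] at this
    rw [this, Fin.card_Iio]
  have hA : 0 < ∏ i ∈ Finset.Iio j, (e i - e j) := by
    apply Finset.prod_pos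
    intro i hi
    simp only [Finset.mem_Iio] at hi
    have := he hi
    linarith
  have hB : 0 < ∏ i ∈ Finset.Ioi j, (e j - e i) := by
    apply Finset.prod_pos
    intro i hi
    simp only [Finset.mem_Ioi] at hi
    have := he hi
    linarith
  have hpow : (-1 : ℝ) ^ (j : ℕ) * (-1 : ℝ) ^ (j : ℕ) = 1 := by
    rw [← pow_add]
    exact Even.neg_one_pow ⟨j, rfl⟩
  calc (0:ℝ) < ((∏ i ∈ Finset.Iio j, (e i - e j)) * ∏ i ∈ Finset.Ioi j, (e j - e i)) := by
        positivity
  _ = (-1 : ℝ) ^ (j : ℕ) *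
      (((-1 : ℝ) ^ (j : ℕ) * ∏ i ∈ Finset.Iio j, (e i - e j)) * ∏ i ∈ Finset.Ioi j, (e j - e i)) := by
        rw [show ∀ a b c : ℝ, a * (a * b * c) = (a*a) * (b*c) from fun a b c => by ring, hpow]
        ring
  _ = _ := by rw [← h1]

lemma weights (M : ℕ) (H : Matrix (Fin (M + 1)) (Fin (M + 1)) ℝ)
    (htri : ∀ i j : Fin (M + 1),
      (i : ℕ) ≠ (j : ℕ) → (i : ℕ) ≠ (j : ℕ) + 1 → (j : ℕ) ≠ (i : ℕ) + 1 → H i j = 0)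
    (hsub : ∀ i j : Fin (M + 1), (i : ℕ) = (j : ℕ) + 1 → 0 < H i j)
    (hsup : ∀ i j : Fin (M + 1), (j : ℕ) = (i : ℕ) + 1 → 0 < H i j) :
    ∃ dd : Fin (M + 1) → ℝ, dd 0 = 1 ∧ (∀ i, 0 < dd i) ∧
      ∀ i k : Fin (M + 1), H k i * dd k = dd i * H i k := by
  set g : ℕ → ℝ := fun l =>
    if h : l + 1 ≤ M then
      H ⟨l, by omega⟩ ⟨l + 1, by omega⟩ / H ⟨l + 1, by omega⟩ ⟨l, by omega⟩
    else 1 with hg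
  have hgpos : ∀ l : ℕ, l + 1 ≤ M → 0 < g l := by
    intro l hl
    rw [hg]
    simp only [hl, dif_pos]
    exact div_pos (hsup _ _ (by simp)) (hsub _ _ (by simp))
  refine ⟨fun i => ∏ l ∈ Finset.range i, g l, by simp, ?_, ?_⟩
  · intro i
    apply Finset.prod_pos
    intro l hl
    simp only [Finset.mem_range] at hl
    exact hgpos l (by have := i.isLt; omega)
  · intro i k
    rcases Nat.lt_trichotomy (k : ℕ) (i : ℕ) with hlt | heq | hgt
    · rcases Nat.lt_or_ge ((k : ℕ) + 1) (i : ℕ) with h2 | h2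
      · rw [htri k i (by omega) (by omega) (by omega),
          htri i k (by omega) (by omega) (by omega)]
        ring
      · -- (k:ℕ) + 1 = (i:ℕ)
        have hki : (k : ℕ) + 1 = (i : ℕ) := by omega
        have hM : (k : ℕ) + 1 ≤ M := by have := i.isLt; omega
        have hik : (⟨(k : ℕ) + 1, by omega⟩ : Fin (M + 1)) = i := Fin.ext (by simp [hki])
        have hkk : (⟨(k : ℕ), by omega⟩ : Fin (M + 1)) = k := Fin.ext rfl
        have hrange : (i : ℕ) = (k : ℕ) + 1 := hki.symm
        have hprod : ∏ l ∈ Finset.range i, g l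
            = (∏ l ∈ Finset.range k, g l) * g k := by
          rw [hrange, Finset.prod_range_succ]
        have hgk : g (k : ℕ) = H k i / H i k := by
          rw [hg]
          simp only [hM, dif_pos]
          rw [hik, hkk]
        have hne : H i k ≠ 0 := ne_of_gt (hsub i k (by omega))
        simp only []
        rw [hprod, hgk]
        field_simp
    · have : i = k := Fin.ext heq.symm
      subst this; ring
    · rcases Nat.lt_or_ge ((i : ℕ) + 1) (k : ℕ) with h2 | h2
      · rw [htri k i (by omega) (by omega) (by omega),
          htri i k (by omega) (by omega) (by omega)]
        ring
      · have hik : (i : ℕ) + 1 = (k : ℕ) := by omega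
        have hM : (i : ℕ) + 1 ≤ M := by have := k.isLt; omega
        have hkk : (⟨(i : ℕ) + 1, by omega⟩ : Fin (M + 1)) = k := Fin.ext (by simp [hik])
        have hii : (⟨(i : ℕ), by omega⟩ : Fin (M + 1)) = i := Fin.ext rfl
        have hprod : ∏ l ∈ Finset.range k, g l
            = (∏ l ∈ Finset.range i, g l) * g i := by
          rw [show (k : ℕ) = (i : ℕ) + 1 from hik.symm, Finset.prod_range_succ]
        have hgi : g (i : ℕ) = H i k / H k i := by
          rw [hg]
          simp only [hM, dif_pos]
          rw [hkk, hii]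
        have hne : H k i ≠ 0 := ne_of_gt (hsub k i (by omega))
        simp only []
        rw [hprod, hgi]
        field_simp

end CentroAux

open Polynomial Matrix Finset in
/-- For a centrosymmetric tridiagonal matrix `H` (i.e. `J H J = H`) with positive
off-diagonal entries and simple spectrum `e_0 > ⋯ > e_M`, the eigenvector of `e_j`
normalized to have first component `1` satisfies `J v = (-1)^j v`. -/
theorem centrosymmetric_eigenvector_parity (M : ℕ)
    (H : Matrix (Fin (M + 1)) (Fin (M + 1)) ℝ)
    (htri : ∀ i j : Fin (M + 1),
      (i : ℕ) ≠ (j : ℕ) → (i : ℕ) ≠ (j : ℕ) + 1 → (j : ℕ) ≠ (i : ℕ) + 1 → H i j = 0)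
    (hsub : ∀ i j : Fin (M + 1), (i : ℕ) = (j : ℕ) + 1 → 0 < H i j)
    (hsup : ∀ i j : Fin (M + 1), (j : ℕ) = (i : ℕ) + 1 → 0 < H i j)
    (e : Fin (M + 1) → ℝ) (he : StrictAnti e)
    (hchar : H.charpoly = ∏ j : Fin (M + 1), (Polynomial.X - Polynomial.C (e j)))
    (J : Matrix (Fin (M + 1)) (Fin (M + 1)) ℝ)
    (hJ : J = Matrix.of fun i j : Fin (M + 1) => if (i : ℕ) + (j : ℕ) = M then (1 : ℝ) else 0)
    (hcentro : J * H * J = H) :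
    ∀ (j : Fin (M + 1)) (v : Fin (M + 1) → ℝ),
      H.mulVec v = e j • v → v 0 = 1 → J.mulVec v = ((-1 : ℝ) ^ (j : ℕ)) • v := by
  intro j v hv hv0
  have hJm := JmulVec M J hJ
  -- J (J v) = v
  have hJJv : J.mulVec (J.mulVec v) = v := by
    rw [hJm, hJm]
    funext i
    simp [Fin.rev_rev]
  -- J v is an eigenvector
  have hHJ : H.mulVec (J.mulVec v) = e j • J.mulVec v := by
    conv_lhs => rw [← hcentro]
    rw [← Matrix.mulVec_mulVec, ← Matrix.mulVec_mulVec, hJJv, hv, Matrix.mulVec_smul]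
  set s : ℝ := v (Fin.last M) with hs
  have rev0 : (0 : Fin (M + 1)).rev = Fin.last M := by
    apply Fin.ext; simp [Fin.val_rev]
  have revlast : (Fin.last M).rev = (0 : Fin (M + 1)) := by
    apply Fin.ext; simp [Fin.val_rev]
  have h0rev : (J.mulVec v) 0 = s := by
    rw [hJm]
    show v (0 : Fin (M + 1)).rev = s
    rw [rev0]
  have hJv : J.mulVec v = s • v := by
    have := triUnique M H htri (fun i k h => ne_of_gt (hsup i k h)) (e j)
      (J.mulVec v) v hHJ hv hv0
    rw [this, h0rev]
  have hss : s * s = 1 := by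
    have h1 : (J.mulVec v) (Fin.last M) = v 0 := by
      rw [hJm]
      show v (Fin.last M).rev = v 0
      rw [revlast]
    have h2 := congrFun hJv (Fin.last M)
    rw [h1, hv0] at h2
    simpa [hs] using h2.symm
  -- adjugate facts
  set B : Matrix (Fin (M + 1)) (Fin (M + 1)) ℝ := e j • 1 - H with hBdef
  obtain ⟨hA1, hA2⟩ := adjFacts M H e hchar j v hv
  set c : ℝ := ∏ i ∈ Finset.univ.erase j, (e j - e i) with hc
  set r : Fin (M + 1) → ℝ := fun k => B.adjugate (Fin.last M) k with hrdef
  have hBapply : ∀ x y : Fin (M + 1), B x y = e j * (if x = y then 1 else 0) - H x y := by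
    intro x y
    simp [hBdef, Matrix.sub_apply, Matrix.smul_apply, Matrix.one_apply]
  -- r is a left eigenvector
  have hr : Hᵀ.mulVec r = e j • r := by
    funext m
    have h := congrFun (congrFun hA1 m)
    have h2 : ∑ k, r k * B k m = 0 := by
      have := congrFun (congrFun hA1 (Fin.last M)) m
      simpa [Matrix.mul_apply, hrdef, hBdef] using this
    have h3 : ∑ k, r k * B k m = e j * r m - ∑ k, H k m * r k := by
      have hterm : ∀ k, r k * B k m
          = (e j * (if k = m then r k else 0)) - H k m * r k := by
        intro k
        rw [hBapply]
        by_cases hkm : k = m <;> simp [hkm] <;> ring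
      rw [Finset.sum_congr rfl fun k _ => hterm k, Finset.sum_sub_distrib]
      congr 1
      rw [← Finset.mul_sum]
      congr 1
      simp
    have h4 : ∑ k, H k m * r k = e j * r m := by
      rw [h3] at h2; linarith
    have h5 : Hᵀ.mulVec r m = ∑ k, H k m * r k := by
      simp [Matrix.mulVec, dotProduct, Matrix.transpose_apply]
    rw [h5, h4]
    simp
  -- the positive weights
  obtain ⟨dd, hdd0, hddpos, hddrel⟩ := weights M H htri hsub hsup
  set w : Fin (M + 1) → ℝ := fun k => dd k * v k with hwdef
  have hw : Hᵀ.mulVec w = e j • w := by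
    funext m
    have h5 : Hᵀ.mulVec w m = ∑ k, H k m * (dd k * v k) := by
      simp [Matrix.mulVec, dotProduct, Matrix.transpose_apply, hwdef]
    rw [h5]
    have h6 : ∀ k, H k m * (dd k * v k) = dd m * (H m k * v k) := by
      intro k
      calc H k m * (dd k * v k) = (H k m * dd k) * v k := by ring
      _ = (dd m * H m k) * v k := by rw [hddrel m k]
      _ = dd m * (H m k * v k) := by ring
    rw [Finset.sum_congr rfl fun k _ => h6 k, ← Finset.mul_sum]
    have h7 : ∑ k, H m k * v k = e j * v m := by
      have := congrFun hv m
      simpa [Matrix.mulVec, dotProduct] using this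
    rw [h7]
    simp [hwdef]
    ring
  -- uniqueness for the transposed (also tridiagonal) matrix
  have htriT : ∀ i k : Fin (M + 1),
      (i : ℕ) ≠ (k : ℕ) → (i : ℕ) ≠ (k : ℕ) + 1 → (k : ℕ) ≠ (i : ℕ) + 1 → Hᵀ i k = 0 := by
    intro i k h1 h2 h3
    rw [Matrix.transpose_apply]
    exact htri k i (fun hh => h1 hh.symm) h3 h2
  have hsupT : ∀ i k : Fin (M + 1), (k : ℕ) = (i : ℕ) + 1 → Hᵀ i k ≠ 0 := by
    intro i k hk
    rw [Matrix.transpose_apply]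
    exact ne_of_gt (hsub k i hk)
  have hw0 : w 0 = 1 := by simp [hwdef, hdd0, hv0]
  have hruniq : r = r 0 • w := triUnique M Hᵀ htriT hsupT (e j) r w hr hw hw0
  -- the corner entry of the adjugate is positive
  have hr0 : 0 < r 0 := by
    have hz : ∀ x y : Fin (M + 1), (y : ℕ) + 2 ≤ (x : ℕ) → B x y = 0 := by
      intro x y hxy
      rw [hBapply]
      have hne : x ≠ y := by intro hh; subst hh; omega
      rw [if_neg hne, htri x y (by omega) (by omega) (by omega)]
      ring
    have h8 := adjCorner M B hz
    have h9 : ∀ a : Fin M, B a.succ a.castSucc = -(H a.succ a.castSucc) := by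
      intro a
      rw [hBapply]
      have : a.succ ≠ a.castSucc := by
        intro hh
        have := congrArg Fin.val hh
        simp [Fin.val_succ, Fin.coe_castSucc] at this
      rw [if_neg this]
      ring
    have h10 : ∏ a : Fin M, B a.succ a.castSucc
        = (-1 : ℝ) ^ M * ∏ a : Fin M, H a.succ a.castSucc := by
      rw [Finset.prod_congr rfl fun a _ => h9 a, myProdNeg]
      simp
    have h11 : 0 < ∏ a : Fin M, H a.succ a.castSucc := by
      apply Finset.prod_pos
      intro a _
      exact hsub _ _ (by simp [Fin.val_succ, Fin.coe_castSucc])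
    have h12 : r 0 = (-1 : ℝ) ^ M * ((-1 : ℝ) ^ M * ∏ a : Fin M, H a.succ a.castSucc) := by
      rw [hrdef]
      simp only []
      rw [h8, h10]
    rw [h12, ← mul_assoc, ← pow_add]
    have : Even (M + M) := ⟨M, rfl⟩
    rw [this.neg_one_pow, one_mul]
    exact h11
  -- c * s > 0
  have hcs : 0 < c * s := by
    have h13 : ∑ k, r k * v k = c * s := by
      have := congrFun hA2 (Fin.last M)
      have h14 : B.adjugate.mulVec v (Fin.last M) = ∑ k, r k * v k := by
        simp [Matrix.mulVec, dotProduct, hrdef]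
      rw [h14] at this
      simpa [hs, hc] using this
    have h15 : ∑ k, r k * v k = r 0 * ∑ k, dd k * v k ^ 2 := by
      rw [Finset.mul_sum]
      refine Finset.sum_congr rfl fun k _ => ?_
      have := congrFun hruniq k
      rw [this]
      simp [hwdef]
      ring
    have h16 : 0 < ∑ k, dd k * v k ^ 2 := by
      apply Finset.sum_pos' (fun k _ => mul_nonneg (hddpos k).le (sq_nonneg _))
      exact ⟨0, Finset.mem_univ _, by rw [hdd0, hv0]; norm_num⟩
    rw [← h13, h15]
    positivity
  have hsign := signC M e he j
  rw [← hc] at hsign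
  -- conclude
  rw [hJv]
  have hfin : s = (-1 : ℝ) ^ (j : ℕ) := by
    have hs2 : s = 1 ∨ s = -1 := by
      have : (s - 1) * (s + 1) = 0 := by nlinarith
      rcases mul_eq_zero.mp this with h | h
      · left; linarith
      · right; linarith
    rcases Nat.even_or_odd (j : ℕ) with hpar | hpar
    · rw [hpar.neg_one_pow]
      rw [hpar.neg_one_pow] at hsign
      rcases hs2 with h | h
      · exact h
      · exfalso; rw [h] at hcs; nlinarith
    · rw [hpar.neg_one_pow]
      rw [hpar.neg_one_pow] at hsign
      rcases hs2 with h | h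
      · exfalso; rw [h] at hcs; nlinarith
      · exact h
  rw [hfin]
end

section
/- Let u_1, u_2 > 0, |v_1| < u_1 + 1/2, |v_2| < u_2 + 1/2, M ∈ ℕ, and α = π/(u_1 + u_2 + M). Then for each integer 1 ≤ k ≤ M the trigonometric quantity [sin(αk/2)/sin(α(u_1+k)/2)] · [cos(α(u_1-u_2+k)/2)/cos(α(u_1+k)/2)] · [sin(α(u_1-v_1-1/2+k)/2)/sin(α(u_1-1/2+k)/2)] · [cos(α(u_1-v_2-1/2+k)/2)/cos(α(u_1-1/2+k)/2)] is strictly positive. -/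
open Real

/-- Positivity of the principal trigonometric factor of the subdiagonal coefficient
`a_k` of the finite discrete Heun equation, for parameters in the domain
`u₁, u₂ > 0`, `|v_r| < u_r + 1/2` and `α = π/(u₁ + u₂ + M)`. -/
theorem heun_coefficient_positivity (M : ℕ) (u1 u2 v1 v2 : ℝ)
    (hu1 : 0 < u1) (hu2 : 0 < u2)
    (hv1 : |v1| < u1 + 1/2) (hv2 : |v2| < u2 + 1/2)
    (k : ℕ) (hk1 : 1 ≤ k) (hkM : k ≤ M) :
    0 < (Real.sin (Real.pi / (u1 + u2 + M) * k / 2) /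
          Real.sin (Real.pi / (u1 + u2 + M) * (u1 + k) / 2)) *
        (Real.cos (Real.pi / (u1 + u2 + M) * (u1 - u2 + k) / 2) /
          Real.cos (Real.pi / (u1 + u2 + M) * (u1 + k) / 2)) *
        (Real.sin (Real.pi / (u1 + u2 + M) * (u1 - v1 - 1/2 + k) / 2) /
          Real.sin (Real.pi / (u1 + u2 + M) * (u1 - 1/2 + k) / 2)) *
        (Real.cos (Real.pi / (u1 + u2 + M) * (u1 - v2 - 1/2 + k) / 2) /
          Real.cos (Real.pi / (u1 + u2 + M) * (u1 - 1/2 + k) / 2)) := by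
  set S : ℝ := u1 + u2 + M with hSdef
  have hS : 0 < S := by positivity
  have hkM' : (k : ℝ) ≤ M := by exact_mod_cast hkM
  have hk1' : (1 : ℝ) ≤ k := by exact_mod_cast hk1
  have hv1l := (abs_lt.mp hv1).1
  have hv1r := (abs_lt.mp hv1).2
  have hv2l := (abs_lt.mp hv2).1
  have hv2r := (abs_lt.mp hv2).2
  have hsin : ∀ t : ℝ, 0 < t → t < 2 * S → 0 < Real.sin (Real.pi / S * t / 2) := by
    intro t ht1 ht2
    apply Real.sin_pos_of_pos_of_lt_pi
    · positivity
    · have : Real.pi / S * t / 2 = Real.pi * (t / (2 * S)) := by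
        field_simp
      rw [this]
      calc Real.pi * (t / (2 * S)) < Real.pi * 1 := by
            apply mul_lt_mul_of_pos_left _ Real.pi_pos
            rw [div_lt_one (by positivity)]; exact ht2
        _ = Real.pi := mul_one _
  have hcos : ∀ t : ℝ, -S < t → t < S → 0 < Real.cos (Real.pi / S * t / 2) := by
    intro t ht1 ht2
    apply Real.cos_pos_of_mem_Ioo
    constructor
    · have : Real.pi / S * t / 2 = Real.pi / 2 * (t / S) := by rw [div_mul_eq_mul_div, div_div, mul_comm S 2, ← div_div, mul_div_assoc]; ring
      rw [this]
      have h1 : (-1 : ℝ) < t / S := by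
        rw [neg_lt, ← neg_div, div_lt_one hS]; linarith
      nlinarith [Real.pi_pos, Real.pi_div_two_pos]
    · have : Real.pi / S * t / 2 = Real.pi / 2 * (t / S) := by rw [div_mul_eq_mul_div, div_div, mul_comm S 2, ← div_div, mul_div_assoc]; ring
      rw [this]
      have h1 : t / S < 1 := by rw [div_lt_one hS]; exact ht2
      nlinarith [Real.pi_div_two_pos]
  have s1 := hsin k (by linarith) (by simp only [hSdef]; linarith)
  have s2 := hsin (u1 + k) (by linarith) (by simp only [hSdef]; linarith)
  have s3 := hsin (u1 - v1 - 1/2 + k) (by linarith) (by simp only [hSdef]; linarith)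
  have s4 := hsin (u1 - 1/2 + k) (by linarith) (by simp only [hSdef]; linarith)
  have c1 := hcos (u1 - u2 + k) (by simp only [hSdef]; linarith) (by simp only [hSdef]; linarith)
  have c2 := hcos (u1 + k) (by simp only [hSdef]; linarith) (by simp only [hSdef]; linarith)
  have c3 := hcos (u1 - v2 - 1/2 + k) (by simp only [hSdef]; linarith)
    (by simp only [hSdef]; linarith)
  have c4 := hcos (u1 - 1/2 + k) (by simp only [hSdef]; linarith) (by simp only [hSdef]; linarith)
  exact mul_pos (mul_pos (mul_pos (div_pos s1 s2) (div_pos c1 c2)) (div_pos s3 s4))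
    (div_pos c3 c4)
end

section
/- Let p_0,...,p_{M+1} be real polynomials with p_0 = 1, p_1(x) = x - b_0, and p_{k+1}(x) = (x - b_k)p_k(x) - λ_k p_{k-1}(x) for 1 ≤ k ≤ M with all λ_k > 0, and suppose p_{M+1}(x) = Π_{j=0}^{M}(x - e_j) with e_0 > e_1 > ... > e_M. Then Π_{j=0}^{M} p_M(e_j) = (-1)^{M(M+1)/2} · Π_{l=1}^{M} λ_l^{l}. -/
open Polynomial

lemma prod_eval_roots_eq (g : Polynomial ℂ) (hg : g.Monic) (a : ℂ) :
    g.eval a = (g.roots.map fun b => a - b).prod := by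
  conv_lhs => rw [(IsAlgClosed.splits g).eq_prod_roots_of_monic hg]
  rw [eval_multiset_prod, Multiset.map_map]
  simp

lemma prod_eval_roots_swap (f g : Polynomial ℂ) (hf : f.Monic) (hg : g.Monic) :
    (f.roots.map (fun a => g.eval a)).prod =
      (-1) ^ (f.natDegree * g.natDegree) * (g.roots.map (fun a => f.eval a)).prod := by
  have hcf : f.roots.card = f.natDegree :=
    splits_iff_card_roots.mp (IsAlgClosed.splits f)
  have hcg : g.roots.card = g.natDegree :=
    splits_iff_card_roots.mp (IsAlgClosed.splits g)
  have h1 : (f.roots.map (fun a => g.eval a)).prod =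
      (f.roots.map fun a => (g.roots.map fun b => a - b).prod).prod := by
    congr 1; exact Multiset.map_congr rfl fun a _ => prod_eval_roots_eq g hg a
  rw [h1, Multiset.prod_map_prod_map]
  have h2 : ∀ b : ℂ, (f.roots.map fun a => a - b).prod
      = (-1) ^ f.natDegree * (f.roots.map fun a => b - a).prod := by
    intro b
    have : (f.roots.map fun a => a - b) = (f.roots.map fun a => (-1) * (b - a)) := by
      apply Multiset.map_congr rfl; intro a _; ring
    rw [this]
    rw [Multiset.prod_map_mul]
    congr 1
    simp [hcf]
  calc (g.roots.map fun b => (f.roots.map fun a => a - b).prod).prod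
      = (g.roots.map fun b => (-1) ^ f.natDegree * (f.roots.map fun a => b - a).prod).prod := by
        congr 1; exact Multiset.map_congr rfl fun b _ => h2 b
    _ = ((-1) ^ f.natDegree) ^ g.roots.card * (g.roots.map fun b => (f.roots.map fun a => b - a).prod).prod := by
        rw [Multiset.prod_map_mul]; congr 1; simp
    _ = (-1) ^ (f.natDegree * g.natDegree) * (g.roots.map (fun a => f.eval a)).prod := by
        rw [hcg, ← pow_mul]
        congr 1
        exact congrArg Multiset.prod
          (Multiset.map_congr rfl fun b _ => (prod_eval_roots_eq f hf b).symm)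

/-- Product of the values of `p_M` at the roots `e_0 > ⋯ > e_M` of `p_{M+1}`, for a
monic three-term recurrence with positive coefficients `λ_k`:
`∏_j p_M(e_j) = (-1)^{M(M+1)/2} ∏_{l=1}^M λ_l^l`. -/
theorem product_pM_at_roots (M : ℕ) (p : ℕ → Polynomial ℝ) (b lam : ℕ → ℝ)
    (hp0 : p 0 = 1)
    (hp1 : p 1 = Polynomial.X - Polynomial.C (b 0))
    (hrec : ∀ k, 1 ≤ k → k ≤ M →
      p (k + 1) = (Polynomial.X - Polynomial.C (b k)) * p k - Polynomial.C (lam k) * p (k - 1))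
    (hlam : ∀ k, 1 ≤ k → k ≤ M → 0 < lam k)
    (e : Fin (M + 1) → ℝ) (he : StrictAnti e)
    (hfact : p (M + 1) = ∏ j : Fin (M + 1), (Polynomial.X - Polynomial.C (e j))) :
    ∏ j : Fin (M + 1), (p M).eval (e j)
      = (-1 : ℝ) ^ (M * (M + 1) / 2) * ∏ l ∈ Finset.Icc 1 M, lam l ^ l := by
  -- monicity and degrees
  have hmono : ∀ k, k ≤ M + 1 → (p k).Monic ∧ (p k).natDegree = k := by
    intro k
    induction k using Nat.strong_induction_on with
    | _ k ih =>
      intro hk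
      match k with
      | 0 => exact ⟨by rw [hp0]; exact monic_one, by rw [hp0]; exact natDegree_one⟩
      | 1 => exact ⟨by rw [hp1]; exact monic_X_sub_C _, by rw [hp1, natDegree_X_sub_C]⟩
      | (n+2) =>
        obtain ⟨m1, d1⟩ := ih (n+1) (by omega) (by omega)
        obtain ⟨m0, d0⟩ := ih n (by omega) (by omega)
        have hr := hrec (n+1) (by omega) (by omega)
        simp only [Nat.add_sub_cancel] at hr
        have hA : ((X - C (b (n+1))) * p (n+1)).Monic := (monic_X_sub_C _).mul m1
        have hAd : ((X - C (b (n+1))) * p (n+1)).natDegree = n + 2 := by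
          rw [(monic_X_sub_C _).natDegree_mul m1, natDegree_X_sub_C, d1]
          omega
        have hdeg : (C (lam (n+1)) * p n).degree < ((X - C (b (n+1))) * p (n+1)).degree := by
          have h1 : (C (lam (n+1)) * p n).degree ≤ (n : WithBot ℕ) := by
            refine le_trans (degree_mul_le _ _) ?_
            rw [degree_eq_natDegree m0.ne_zero, d0]
            calc (C (lam (n+1))).degree + (n : WithBot ℕ)
                ≤ 0 + (n : WithBot ℕ) := add_le_add_left degree_C_le _
              _ = (n : WithBot ℕ) := zero_add _
          have h2 : ((X - C (b (n+1))) * p (n+1)).degree = ((n + 2 : ℕ) : WithBot ℕ) := by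
            rw [degree_eq_natDegree hA.ne_zero, hAd]
          rw [h2]
          exact lt_of_le_of_lt h1 (by exact_mod_cast Nat.lt_succ_of_lt (Nat.lt_succ_self n))
        refine ⟨by rw [hr]; exact hA.sub_of_left hdeg, ?_⟩
        rw [hr, natDegree_eq_of_degree_eq (degree_sub_eq_left_of_degree_lt hdeg), hAd]
  -- complexified polynomials
  set q : ℕ → Polynomial ℂ := fun k => (p k).map (algebraMap ℝ ℂ) with hq
  have hqm : ∀ k, k ≤ M + 1 → (q k).Monic ∧ (q k).natDegree = k := by
    intro k hk
    obtain ⟨hm, hd⟩ := hmono k hk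
    exact ⟨hm.map _, by rw [hq]; simpa [natDegree_map] using hd⟩
  -- the main induction
  have main : ∀ k, k ≤ M →
      ((q (k+1)).roots.map (fun a => (q k).eval a)).prod
        = (-1 : ℂ) ^ (k * (k + 1) / 2) * ∏ l ∈ Finset.Icc 1 k, (lam l : ℂ) ^ l := by
    intro k
    induction k with
    | zero =>
      intro _
      have hq1 : q 1 = X - C ((b 0 : ℝ) : ℂ) := by
        rw [hq]; simp [hp1]
      have hq0 : q 0 = 1 := by rw [hq]; simp [hp0]
      rw [hq1, hq0]
      simp [roots_X_sub_C]
    | succ k ihk =>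
      intro hkM
      have ih := ihk (by omega)
      have hr := hrec (k+1) (by omega) hkM
      simp only [Nat.add_sub_cancel] at hr
      have hqr : q (k+2) = (X - C ((b (k+1) : ℝ) : ℂ)) * q (k+1) - C ((lam (k+1) : ℝ) : ℂ) * q k := by
        rw [hq]; simp only [hr, Polynomial.map_sub, Polynomial.map_mul, Polynomial.map_X,
          Polynomial.map_C]; rfl
      obtain ⟨m2, d2⟩ := hqm (k+2) (by omega)
      obtain ⟨m1, d1⟩ := hqm (k+1) (by omega)
      obtain ⟨m0, d0⟩ := hqm k (by omega)
      have hcard1 : (q (k+1)).roots.card = k + 1 := by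
        rw [splits_iff_card_roots.mp (IsAlgClosed.splits _), d1]
      -- swap
      rw [prod_eval_roots_swap _ _ m2 m1, d2, d1]
      have heval : ∀ a ∈ (q (k+1)).roots,
          (q (k+2)).eval a = (-(lam (k+1) : ℂ)) * (q k).eval a := by
        intro a ha
        have hroot : (q (k+1)).eval a = 0 := isRoot_of_mem_roots ha
        rw [hqr]
        simp [hroot]
      have h3 : ((q (k+1)).roots.map (fun a => (q (k+2)).eval a)).prod
          = (-(lam (k+1) : ℂ)) ^ (k+1) * ((q (k+1)).roots.map (fun a => (q k).eval a)).prod := by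
        rw [Multiset.map_congr rfl heval, Multiset.prod_map_mul]
        congr 1
        rw [Multiset.map_const', Multiset.prod_replicate, hcard1]
      rw [h3, ih]
      have hsign : ((-1 : ℂ)) ^ ((k + 2) * (k + 1)) = 1 :=
        Even.neg_one_pow (by rw [mul_comm]; exact Nat.even_mul_succ_self (k+1))
      rw [hsign, one_mul]
      rw [Finset.prod_Icc_succ_top (by omega : 1 ≤ k + 1)]
      have harith : (k + 1) * (k + 2) / 2 = k * (k + 1) / 2 + (k + 1) := by
        obtain ⟨c, hc⟩ := Nat.even_mul_succ_self k
        have h2 : (k + 1) * (k + 2) = k * (k + 1) + 2 * (k + 1) := by ring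
        omega
      have hpow : ((-1 : ℂ)) ^ ((k + 1) * (k + 2) / 2)
          = (-1 : ℂ) ^ (k * (k + 1) / 2) * (-1 : ℂ) ^ (k + 1) := by
        rw [harith, pow_add]
      rw [hpow]
      have hneg : (-(lam (k+1) : ℂ)) ^ (k+1) = (-1 : ℂ) ^ (k+1) * ((lam (k+1) : ℂ)) ^ (k+1) := by
        rw [← neg_one_mul, mul_pow]
      rw [hneg]
      ring
  have hM := main M le_rfl
  -- identify roots of q (M+1)
  have hqfact : q (M+1) = ((Finset.univ.val.map fun j : Fin (M+1) => ((e j : ℝ) : ℂ)).map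
      fun a => X - C a).prod := by
    rw [hq]
    simp only [hfact, Polynomial.map_prod, Polynomial.map_sub, Polynomial.map_X, Polynomial.map_C]
    rw [Multiset.map_map]
    rfl
  have hroots : (q (M+1)).roots = Finset.univ.val.map fun j : Fin (M+1) => ((e j : ℝ) : ℂ) := by
    rw [hqfact, roots_multiset_prod_X_sub_C]
  rw [hroots] at hM
  have hlhs : ((Finset.univ.val.map fun j : Fin (M+1) => ((e j : ℝ) : ℂ)).map
      (fun a => (q M).eval a)).prod = ((∏ j : Fin (M+1), (p M).eval (e j) : ℝ) : ℂ) := by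
    rw [Multiset.map_map]
    push_cast
    rw [Finset.prod_eq_multiset_prod]
    congr 1
    apply Multiset.map_congr rfl
    intro j _
    rw [hq]
    simp only [eval_map]
    simpa using eval₂_at_apply (algebraMap ℝ ℂ) (e j)
  rw [hlhs] at hM
  have : ((∏ j : Fin (M+1), (p M).eval (e j) : ℝ) : ℂ)
      = (((-1 : ℝ) ^ (M * (M + 1) / 2) * ∏ l ∈ Finset.Icc 1 M, lam l ^ l : ℝ) : ℂ) := by
    rw [hM]; push_cast; ring
  exact_mod_cast this
end

section
/- Let q be a primitive root of unity or generic complex number with q = e^{iα}, α = π/(u_1 + u_2 + M) for M ∈ ℕ and positive reals u_1, u_2 (so q^{u_1+u_2+M} = -1). Then the terminating basic hypergeometric series ₄φ₃(q^{-M}, q^{2u_1+M}, q^{-j}, q^{u_1+u_2+v_1+v_2+j}; -q^{u_1+u_2}, q^{u_1+v_1+1/2}, -q^{u_1+v_2+1/2}; q, q) equals (-1)^j · Π_{l=0}^{j-1} [ sin(α(u_2+v_2+1/2+l)/2)/sin(α(u_1+v_1+1/2+l)/2) ] · [ cos(α(u_2+v_1+1/2+l)/2)/cos(α(u_1+v_2+1/2+l)/2)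 ] for 0 ≤ j ≤ M. -/
open Complex

/-- q-Pochhammer symbol `(a;q)_n = ∏_{l=0}^{n-1} (1 - a q^l)`. -/
noncomputable def qPoch (a q : ℂ) (n : ℕ) : ℂ := ∏ l ∈ Finset.range n, (1 - a * q ^ l)

lemma qPoch_zero (a q : ℂ) : qPoch a q 0 = 1 := rfl
lemma qPoch_succ (a q : ℂ) (n : ℕ) : qPoch a q (n+1) = qPoch a q n * (1 - a * q ^ n) :=
  Finset.prod_range_succ _ n
lemma qPoch_succ' (a q : ℂ) (n : ℕ) : qPoch a q (n+1) = (1 - a) * qPoch (a*q) q n := by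
  simp only [qPoch]
  rw [Finset.prod_range_succ' (fun l => (1 - a * q ^ l)) n]
  rw [mul_comm]
  congr 1
  · norm_num
  · refine Finset.prod_congr rfl fun i _ => ?_
    rw [pow_succ']; ring
lemma qPoch_one (a q : ℂ) : qPoch a q 1 = 1 - a := by simp [qPoch]

noncomputable def tterm (q a c e x y : ℂ) (k : ℕ) : ℂ :=
  qPoch a q k * qPoch x q k * qPoch y q k * q ^ k /
    (qPoch q q k * qPoch c q k * qPoch e q k)

noncomputable def gterm (q a c e s b0 : ℂ) : ℕ → ℂ
  | 0 => 0
  | (m+1) => (b0*q - s^2) / ((s-c)*(s-e)) *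
      (qPoch s q m * qPoch (b0*q/s) q m * qPoch a q (m+1)) /
      (qPoch q q m * qPoch c q m * qPoch e q m)

noncomputable def tauv (a c e s : ℂ) : ℂ :=
  (1 - c/(a*s)) * (1 - a*s/e) / ((1 - c/s) * (1 - s/e))

lemma gterm_zero (q a c e s b0 : ℂ) : gterm q a c e s b0 0 = 0 := rfl

lemma gterm_succ (q a c e s b0 : ℂ) (m : ℕ) : gterm q a c e s b0 (m+1) =
    (b0*q - s^2) / ((s-c)*(s-e)) *
      (qPoch s q m * qPoch (b0*q/s) q m * qPoch a q (m+1)) /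
      (qPoch q q m * qPoch c q m * qPoch e q m) := rfl

lemma gterm_eq (q a c e s : ℂ) (ha : a ≠ 0) (hq : q ≠ 0)
    (hsc : s - c ≠ 0) (hse : s - e ≠ 0) (hes : e - s ≠ 0) (m : ℕ) :
    gterm q a c e s (e*c/(a*q)) (m+1) =
    ((a*s^2 - e*c) * (qPoch s q m * qPoch (e*c/(a*q)*q/s) q m * qPoch a q (m+1))) /
      (a*((s-c)*(e-s)) * (qPoch q q m * qPoch c q m * qPoch e q m)) := by
  rw [gterm_succ]
  conv_rhs => rw [← div_div]
  congr 1
  rw [div_mul_eq_mul_div, div_mul_eq_mul_div, div_eq_div_iff (mul_ne_zero hsc hse)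
    (mul_ne_zero ha (mul_ne_zero hsc hes))]
  field_simp
  ring

lemma tauv_eq (a c e s : ℂ) (ha : a ≠ 0) (hs : s ≠ 0) (he : e ≠ 0)
    (hsc : s - c ≠ 0) (hes : e - s ≠ 0) :
    tauv a c e s = (a*s-c)*(e-a*s) / (a*((s-c)*(e-s))) := by
  rw [tauv]
  have h1cs : (1 : ℂ) - c/s ≠ 0 := by
    rw [show (1:ℂ) - c/s = (s-c)/s by field_simp]
    exact div_ne_zero hsc hs
  have h1se : (1 : ℂ) - s/e ≠ 0 := by
    rw [show (1:ℂ) - s/e = (e-s)/e by field_simp]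
    exact div_ne_zero hes he
  rw [div_eq_div_iff (mul_ne_zero h1cs h1se) (mul_ne_zero ha (mul_ne_zero hsc hes))]
  field_simp

lemma combo0 (A T W N G B : ℂ) (hW : W ≠ 0) (hB : B ≠ 0)
    (key : A * W = T * N - G) :
    A / B = T / W * (N / B) + 0 - G / (W * B) := by
  have hA : A = (T*N - G)/W := (eq_div_iff hW).mpr key
  rw [hA]
  field_simp
  ring

lemma combo (A T W N G1 G2 B Dm E : ℂ) (hW : W ≠ 0) (hB : B ≠ 0) (hBf : B = Dm * E)
    (key : A * W = T * N + G1 * E - G2) :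
    A / B = T / W * (N / B) + G1 / (W * Dm) - G2 / (W * B) := by
  subst hBf
  obtain ⟨hDm, hE⟩ := mul_ne_zero_iff.mp hB
  have hA : A = (T*N + G1*E - G2)/W := (eq_div_iff hW).mpr key
  rw [hA]
  field_simp

lemma step (q a c e s : ℂ) (hq : q ≠ 0) (ha : a ≠ 0) (hs : s ≠ 0) (he : e ≠ 0) (hc : c ≠ 0)
    (hsc : s - c ≠ 0) (hse : s - e ≠ 0) (k : ℕ)
    (hPq : qPoch q q k ≠ 0) (hPc : qPoch c q k ≠ 0) (hPe : qPoch e q k ≠ 0) :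
    tterm q a c e (s/q) (e*c/(a*q)*q/s) k
      = tauv a c e s * tterm q a c e s (e*c/(a*q)/s) k
        + gterm q a c e s (e*c/(a*q)) k - gterm q a c e s (e*c/(a*q)) (k+1) := by
  have hes : e - s ≠ 0 := fun h => hse (by linear_combination -h)
  have hW : a*((s-c)*(e-s)) ≠ 0 := mul_ne_zero ha (mul_ne_zero hsc hes)
  rw [tauv_eq a c e s ha hs he hsc hes]
  cases k with
  | zero =>
    rw [gterm_zero, gterm_eq q a c e s ha hq hsc hse hes 0]
    simp only [tterm]
    apply combo0 _ _ _ _ _ _ hW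
      (mul_ne_zero (mul_ne_zero hPq hPc) hPe)
    simp only [qPoch_zero, qPoch_succ, pow_zero]
    field_simp
    ring
  | succ m =>
    rw [gterm_eq q a c e s ha hq hsc hse hes m, gterm_eq q a c e s ha hq hsc hse hes (m+1)]
    simp only [tterm]
    rw [qPoch_succ' (s/q) q m, div_mul_cancel₀ s hq]
    rw [qPoch_succ' (e*c/(a*q)/s) q m,
        show e*c/(a*q)/s*q = e*c/(a*q)*q/s from by ring]
    rw [qPoch_succ a q (m+1)]
    rw [qPoch_succ a q m, qPoch_succ s q m, qPoch_succ (e*c/(a*q)*q/s) q m,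
        qPoch_succ q q m, qPoch_succ c q m, qPoch_succ e q m, pow_succ q m]
    rw [qPoch_succ q q m] at hPq
    rw [qPoch_succ c q m] at hPc
    rw [qPoch_succ e q m] at hPe
    apply combo (Dm := qPoch q q m * qPoch c q m * qPoch e q m)
      (E := (1 - q * q ^ m) * (1 - c * q ^ m) * (1 - e * q ^ m)) (hW := hW)
      (hB := mul_ne_zero (mul_ne_zero hPq hPc) hPe) (hBf := by ring)
    field_simp
    ring

lemma one_sub_exp (α x : ℝ) :
    1 - Complex.exp (Complex.I * α * x)
      = -2 * Complex.I * ((Real.sin (α*x/2) : ℝ) : ℂ) * Complex.exp (Complex.I * α * ((x/2 : ℝ) : ℂ)) := by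
  have h : Complex.exp (Complex.I * α * x)
      = Complex.exp (Complex.I * α * ((x/2:ℝ):ℂ)) * Complex.exp (Complex.I * α * ((x/2:ℝ):ℂ)) := by
    rw [← Complex.exp_add]; congr 1; push_cast; ring
  have he : Complex.exp (Complex.I * α * ((x/2:ℝ):ℂ))
      = ((Real.cos (α*x/2) : ℝ) : ℂ) + ((Real.sin (α*x/2) : ℝ) : ℂ) * Complex.I := by
    rw [show Complex.I * (α:ℂ) * ((x/2:ℝ):ℂ) = (((α*x/2 : ℝ)):ℂ) * Complex.I by push_cast; ring,
      Complex.exp_mul_I, ← Complex.ofReal_cos, ← Complex.ofReal_sin]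
  have hsc : ((Real.sin (α*x/2) : ℝ) : ℂ)^2 + ((Real.cos (α*x/2) : ℝ) : ℂ)^2 = 1 := by
    exact_mod_cast congrArg (fun r : ℝ => (r : ℂ)) (Real.sin_sq_add_cos_sq (α*x/2))
  rw [h, he]
  linear_combination (-1 : ℂ) * hsc + ((Real.sin (α*x/2) : ℝ) : ℂ)^2 * Complex.I_sq

lemma one_add_exp (α x : ℝ) :
    1 + Complex.exp (Complex.I * α * x)
      = 2 * ((Real.cos (α*x/2) : ℝ) : ℂ) * Complex.exp (Complex.I * α * ((x/2 : ℝ) : ℂ)) := by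
  have h : Complex.exp (Complex.I * α * x)
      = Complex.exp (Complex.I * α * ((x/2:ℝ):ℂ)) * Complex.exp (Complex.I * α * ((x/2:ℝ):ℂ)) := by
    rw [← Complex.exp_add]; congr 1; push_cast; ring
  have he : Complex.exp (Complex.I * α * ((x/2:ℝ):ℂ))
      = ((Real.cos (α*x/2) : ℝ) : ℂ) + ((Real.sin (α*x/2) : ℝ) : ℂ) * Complex.I := by
    rw [show Complex.I * (α:ℂ) * ((x/2:ℝ):ℂ) = (((α*x/2 : ℝ)):ℂ) * Complex.I by push_cast; ring,
      Complex.exp_mul_I, ← Complex.ofReal_cos, ← Complex.ofReal_sin]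
  have hsc : ((Real.sin (α*x/2) : ℝ) : ℂ)^2 + ((Real.cos (α*x/2) : ℝ) : ℂ)^2 = 1 := by
    exact_mod_cast congrArg (fun r : ℝ => (r : ℂ)) (Real.sin_sq_add_cos_sq (α*x/2))
  rw [h, he]
  linear_combination (-1 : ℂ) * hsc + ((Real.sin (α*x/2) : ℝ) : ℂ)^2 * Complex.I_sq

lemma ratio_eq (S1 S2 B1 B2 : ℝ) (hS1 : S1 ≠ 0) (hB1 : B1 ≠ 0) :
    (4 * Complex.I * (B2:ℂ) * (S2:ℂ)) / (-4 * Complex.I * (S1:ℂ) * (B1:ℂ))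
      = -(((S2/S1) * (B2/B1) : ℝ) : ℂ) := by
  have h1 : (S1:ℂ) ≠ 0 := Complex.ofReal_ne_zero.mpr hS1
  have h2 : (B1:ℂ) ≠ 0 := Complex.ofReal_ne_zero.mpr hB1
  rw [div_eq_iff (by exact mul_ne_zero (mul_ne_zero (mul_ne_zero (by norm_num) Complex.I_ne_zero) h1) h2)]
  push_cast
  field_simp

set_option maxHeartbeats 2000000 in
/-- Evaluation of the terminating ₄φ₃ series
`₄φ₃(q^{-M}, q^{2u₁+M}, q^{-j}, q^{u₁+u₂+v₁+v₂+j}; -q^{u₁+u₂}, q^{u₁+v₁+1/2}, -q^{u₁+v₂+1/2}; q, q)`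
at `q = e^{iα}`, `α = π/(u₁+u₂+M)` (so `q^{u₁+u₂+M} = -1`), via the Jackson
q-Pfaff–Saalschütz sum; here `q^x` means `e^{iαx}` for real exponents `x`. -/
theorem phi43_truncated_evaluation (M : ℕ) (u1 u2 v1 v2 : ℝ)
    (hu1 : 0 < u1) (hu2 : 0 < u2)
    (hv1 : |v1| < u1 + 1/2) (hv2 : |v2| < u2 + 1/2)
    (j : ℕ) (hj : j ≤ M) :
    let α : ℝ := Real.pi / (u1 + u2 + M)
    let qp : ℝ → ℂ := fun x => Complex.exp (Complex.I * (α : ℂ) * (x : ℂ))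
    let q : ℂ := qp 1
    (∑ n ∈ Finset.range (M + 1),
        (qPoch (qp (-(M : ℝ))) q n * qPoch (qp (2 * u1 + M)) q n * qPoch (qp (-(j : ℝ))) q n *
          qPoch (qp (u1 + u2 + v1 + v2 + j)) q n * q ^ n) /
        (qPoch q q n * qPoch (-(qp (u1 + u2))) q n * qPoch (qp (u1 + v1 + 1/2)) q n *
          qPoch (-(qp (u1 + v2 + 1/2))) q n))
      = (-1 : ℂ) ^ j * ∏ l ∈ Finset.range j,
          (((Real.sin (α * (u2 + v2 + 1/2 + l) / 2) / Real.sin (α * (u1 + v1 + 1/2 + l) / 2)) *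
            (Real.cos (α * (u2 + v1 + 1/2 + l) / 2) / Real.cos (α * (u1 + v2 + 1/2 + l) / 2))
              : ℝ) : ℂ) := by
  intro α qp q
  obtain ⟨hv1l, hv1r⟩ := abs_lt.mp hv1
  obtain ⟨hv2l, hv2r⟩ := abs_lt.mp hv2
  have hM0 : (0:ℝ) ≤ (M:ℝ) := Nat.cast_nonneg M
  have hD : (0:ℝ) < u1 + u2 + M := by positivity
  have hαdef : α = Real.pi / (u1 + u2 + M) := rfl
  have hαpos : 0 < α := by rw [hαdef]; positivity
  have hαD : α * (u1 + u2 + (M:ℝ)) = Real.pi := by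
    rw [hαdef]; field_simp
  have hqp : ∀ x : ℝ, qp x = Complex.exp (Complex.I * (α:ℂ) * (x:ℂ)) := fun _ => rfl
  have hqpne : ∀ x : ℝ, qp x ≠ 0 := fun x => by rw [hqp]; exact Complex.exp_ne_zero _
  have hqpmul : ∀ x y : ℝ, qp x * qp y = qp (x + y) := by
    intro x y; rw [hqp, hqp, hqp, ← Complex.exp_add]; congr 1; push_cast; ring
  have hqparg : ∀ {x y : ℝ}, x = y → qp x = qp y := fun h => by rw [h]
  have hqp0 : qp 0 = 1 := by rw [hqp]; simp
  have hq1 : q = qp 1 := rfl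
  have hqne : q ≠ 0 := by rw [hq1]; exact hqpne 1
  have hqpow : ∀ n : ℕ, q ^ n = qp n := by
    intro n; rw [hq1, hqp, hqp, ← Complex.exp_nat_mul]; congr 1; push_cast; ring
  have hqpM : qp (u1 + u2 + (M:ℝ)) = -1 := by
    rw [hqp, show Complex.I * (α:ℂ) * ((u1 + u2 + (M:ℝ) : ℝ):ℂ)
        = (((α * (u1 + u2 + (M:ℝ)) : ℝ)):ℂ) * Complex.I by push_cast; ring, hαD,
      Complex.exp_pi_mul_I]
  have hflip : ∀ x : ℝ, qp (x + (u1 + u2 + (M:ℝ))) = -qp x := by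
    intro x; rw [← hqpmul, hqpM]; ring
  have hnegarg : ∀ x y : ℝ, x + (u1 + u2 + (M:ℝ)) = y → qp y = -qp x :=
    fun x y h => by rw [← h, hflip]
  have hqpdiv : ∀ x y : ℝ, qp x / qp y = qp (x - y) := by
    intro x y; rw [div_eq_iff (hqpne y), hqpmul]; exact hqparg (by ring)
  have hsub : ∀ x : ℝ, 1 - qp x = -2 * Complex.I * ((Real.sin (α*x/2) : ℝ):ℂ) * qp (x/2) := by
    intro x; rw [hqp, hqp]; exact one_sub_exp α x
  have hadd : ∀ x : ℝ, 1 + qp x = 2 * ((Real.cos (α*x/2) : ℝ):ℂ) * qp (x/2) := by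
    intro x; rw [hqp, hqp]; exact one_add_exp α x
  have hsinpos : ∀ x : ℝ, 0 < x → x < 2*(u1+u2+(M:ℝ)) → 0 < Real.sin (α*x/2) := by
    intro x hx1 hx2
    apply Real.sin_pos_of_pos_of_lt_pi
    · have := mul_pos hαpos hx1; linarith
    · have h2 : α*x < α*(2*(u1+u2+(M:ℝ))) := by
        exact mul_lt_mul_of_pos_left hx2 hαpos
      have h3 : α*(2*(u1+u2+(M:ℝ))) = 2*Real.pi := by
        rw [hαdef]; field_simp
      linarith
  have hcospos : ∀ x : ℝ, -(u1+u2+(M:ℝ)) < x → x < u1+u2+(M:ℝ) → 0 < Real.cos (α*x/2) := by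
    intro x hx1 hx2
    apply Real.cos_pos_of_mem_Ioo
    constructor
    · have h2 : α*(-(u1+u2+(M:ℝ))) < α*x := mul_lt_mul_of_pos_left hx1 hαpos
      have h3 : α*(-(u1+u2+(M:ℝ))) = -Real.pi := by
        rw [hαdef]; field_simp
      linarith
    · have h2 : α*x < α*(u1+u2+(M:ℝ)) := mul_lt_mul_of_pos_left hx2 hαpos
      linarith [hαD]
  have hOneSub : ∀ x : ℝ, 0 < x → x < 2*(u1+u2+(M:ℝ)) → 1 - qp x ≠ 0 := by
    intro x h1 h2
    rw [hsub]
    refine mul_ne_zero (mul_ne_zero (mul_ne_zero ?_ Complex.I_ne_zero) ?_) (hqpne _)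
    · norm_num
    · exact Complex.ofReal_ne_zero.mpr (hsinpos x h1 h2).ne'
  have hOneSub' : ∀ x : ℝ, 0 < x → x < 2*(u1+u2+(M:ℝ)) → 1 - qp (-x) ≠ 0 := by
    intro x h1 h2 h0
    apply hOneSub x h1 h2
    have hxx : qp x * qp (-x) = 1 := by
      rw [hqpmul, show x + -x = (0:ℝ) by ring, hqp0]
    have hid : (1 : ℂ) - qp x = -qp x * (1 - qp (-x)) := by linear_combination (-1:ℂ) * hxx
    rw [hid, h0, mul_zero]
  have hOneAdd : ∀ x : ℝ, -(u1+u2+(M:ℝ)) < x → x < u1+u2+(M:ℝ) → 1 + qp x ≠ 0 := by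
    intro x h1 h2
    rw [hadd]
    refine mul_ne_zero (mul_ne_zero ?_ ?_) (hqpne _)
    · norm_num
    · exact Complex.ofReal_ne_zero.mpr (hcospos x h1 h2).ne'
  set a := qp (2 * u1 + (M:ℝ)) with hadef
  set c := qp (u1 + v1 + 1/2) with hcdef
  set e := -qp (u1 + v2 + 1/2) with hedef
  have hane : a ≠ 0 := by rw [hadef]; exact hqpne _
  have hcne : c ≠ 0 := by rw [hcdef]; exact hqpne _
  have hene : e ≠ 0 := by rw [hedef]; exact neg_ne_zero.mpr (hqpne _)
  have hPq : ∀ k : ℕ, k ≤ M → qPoch q q k ≠ 0 := by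
    intro k hk
    simp only [qPoch]
    rw [Finset.prod_ne_zero_iff]
    intro l hl
    have hl1 : l + 1 ≤ M := by have := Finset.mem_range.mp hl; omega
    have hl1' : (l:ℝ) + 1 ≤ (M:ℝ) := by exact_mod_cast hl1
    rw [hq1, hqpow l, hqpmul]
    exact hOneSub _ (by positivity) (by push_cast; linarith)
  have hPc : ∀ k : ℕ, k ≤ M → qPoch c q k ≠ 0 := by
    intro k hk
    simp only [qPoch]
    rw [Finset.prod_ne_zero_iff]
    intro l hl
    have hl1 : l + 1 ≤ M := by have := Finset.mem_range.mp hl; omega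
    have hl1' : (l:ℝ) + 1 ≤ (M:ℝ) := by exact_mod_cast hl1
    rw [hcdef, hqpow l, hqpmul]
    exact hOneSub _ (by linarith) (by linarith)
  have hPe : ∀ k : ℕ, k ≤ M → qPoch e q k ≠ 0 := by
    intro k hk
    simp only [qPoch]
    rw [Finset.prod_ne_zero_iff]
    intro l hl
    have hl1 : l + 1 ≤ M := by have := Finset.mem_range.mp hl; omega
    have hl1' : (l:ℝ) + 1 ≤ (M:ℝ) := by exact_mod_cast hl1
    have hl0 : (0:ℝ) ≤ (l:ℝ) := Nat.cast_nonneg l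
    rw [hedef, hqpow l, neg_mul, sub_neg_eq_add, hqpmul]
    exact hOneAdd _ (by linarith) (by linarith)
  have hPX : ∀ k : ℕ, k ≤ M → qPoch (qp (-(M:ℝ))) q k ≠ 0 := by
    intro k hk
    simp only [qPoch]
    rw [Finset.prod_ne_zero_iff]
    intro l hl
    have hlM : l + 1 ≤ M := by have := Finset.mem_range.mp hl; omega
    have hlM' : (l:ℝ) + 1 ≤ (M:ℝ) := by exact_mod_cast hlM
    have hl0 : (0:ℝ) ≤ (l:ℝ) := Nat.cast_nonneg l
    rw [hqpow l, hqpmul, show -(M:ℝ) + (l:ℝ) = -((M:ℝ) - l) by ring]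
    exact hOneSub' _ (by linarith) (by linarith)
  have main : ∀ jj : ℕ, jj ≤ M →
      (∑ n ∈ Finset.range (M+1),
          tterm q a c e (qp (-(jj:ℝ))) (qp (u1+u2+v1+v2+(jj:ℝ))) n)
        = (-1:ℂ)^jj * ∏ l ∈ Finset.range jj,
            (((Real.sin (α * (u2 + v2 + 1/2 + (l:ℝ)) / 2) / Real.sin (α * (u1 + v1 + 1/2 + (l:ℝ)) / 2)) *
              (Real.cos (α * (u2 + v1 + 1/2 + (l:ℝ)) / 2) / Real.cos (α * (u1 + v2 + 1/2 + (l:ℝ)) / 2))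
                : ℝ) : ℂ) := by
    intro jj
    induction jj with
    | zero =>
      intro _
      rw [Finset.sum_eq_single_of_mem 0 (Finset.mem_range.mpr (Nat.succ_pos M))]
      · simp [tterm, qPoch_zero]
      · intro b _ hb
        rw [show (-((0:ℕ):ℝ)) = (0:ℝ) by norm_num, hqp0]
        have hz : qPoch 1 q b = 0 := by
          simp only [qPoch]
          apply Finset.prod_eq_zero (Finset.mem_range.mpr (Nat.pos_of_ne_zero hb))
          norm_num
        simp [tterm, hz]
    | succ jj ih =>
      intro hstep
      have hjlt : jj < M := hstep
      have hjM : (jj:ℝ) + 1 ≤ (M:ℝ) := by exact_mod_cast hstep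
      have hj0 : (0:ℝ) ≤ (jj:ℝ) := Nat.cast_nonneg jj
      have hsne : qp (-(jj:ℝ)) ≠ 0 := hqpne _
      have hscne : qp (-(jj:ℝ)) - c ≠ 0 := by
        have hfac : qp (-(jj:ℝ)) - c = qp (-(jj:ℝ)) * (1 - qp (u1+v1+1/2+(jj:ℝ))) := by
          rw [mul_sub, mul_one, hqpmul, hcdef]
          rw [show (-(jj:ℝ) + (u1+v1+1/2+(jj:ℝ))) = u1+v1+1/2 by ring]
        rw [hfac]
        exact mul_ne_zero hsne (hOneSub _ (by linarith) (by linarith))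
      have hsene : qp (-(jj:ℝ)) - e ≠ 0 := by
        have hfac : qp (-(jj:ℝ)) - e = qp (-(jj:ℝ)) * (1 + qp (u1+v2+1/2+(jj:ℝ))) := by
          rw [mul_add, mul_one, hqpmul, hedef, sub_neg_eq_add]
          rw [show (-(jj:ℝ) + (u1+v2+1/2+(jj:ℝ))) = u1+v2+1/2 by ring]
        rw [hfac]
        exact mul_ne_zero hsne (hOneAdd _ (by linarith) (by linarith))
      have hxarg : qp (-((jj+1:ℕ):ℝ)) = qp (-(jj:ℝ))/q := by
        rw [hq1, eq_div_iff (hqpne 1), hqpmul]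
        exact hqparg (by push_cast; ring)
      have hyarg0 : e*c/(a*q)/(qp (-(jj:ℝ))) = qp (u1+u2+v1+v2+(jj:ℝ)) := by
        rw [div_div, div_eq_iff (mul_ne_zero (mul_ne_zero hane hqne) (hqpne _))]
        rw [hedef, hcdef, hadef, hq1]
        simp only [neg_mul, hqpmul]
        rw [eq_comm]
        exact hnegarg _ _ (by push_cast; ring)
      have hyarg : qp (u1+u2+v1+v2+((jj+1:ℕ):ℝ)) = e*c/(a*q)*q/(qp (-(jj:ℝ))) := by
        rw [eq_div_iff (hqpne _), div_mul_eq_mul_div, eq_div_iff (mul_ne_zero hane hqne)]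
        rw [hedef, hcdef, hadef, hq1]
        simp only [neg_mul, hqpmul]
        exact hnegarg _ _ (by push_cast; ring)
      have hg0 : gterm q a c e (qp (-(jj:ℝ))) (e*c/(a*q)) (M+1) = 0 := by
        rw [gterm_succ]
        have hz : qPoch (qp (-(jj:ℝ))) q M = 0 := by
          simp only [qPoch]
          apply Finset.prod_eq_zero (Finset.mem_range.mpr hjlt)
          rw [hqpow, hqpmul, show (-(jj:ℝ) + (jj:ℝ)) = (0:ℝ) by ring, hqp0]
          ring
        rw [hz]
        simp
      -- trig step factor
      have hS1pos : 0 < Real.sin (α * (u1 + v1 + 1/2 + (jj:ℝ)) / 2) :=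
        hsinpos _ (by linarith) (by linarith)
      have hB1pos : 0 < Real.cos (α * (u1 + v2 + 1/2 + (jj:ℝ)) / 2) :=
        hcospos _ (by linarith) (by linarith)
      have hS1ne : ((Real.sin (α * (u1 + v1 + 1/2 + (jj:ℝ)) / 2) : ℝ) : ℂ) ≠ 0 :=
        Complex.ofReal_ne_zero.mpr hS1pos.ne'
      have hB1ne : ((Real.cos (α * (u1 + v2 + 1/2 + (jj:ℝ)) / 2) : ℝ) : ℂ) ≠ 0 :=
        Complex.ofReal_ne_zero.mpr hB1pos.ne'
      have hsinshift : Real.sin (α * ((v1-u1+1/2-(M:ℝ)+(jj:ℝ))) / 2)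
          = -Real.cos (α * (u2 + v1 + 1/2 + (jj:ℝ)) / 2) := by
        rw [show α * ((v1-u1+1/2-(M:ℝ)+(jj:ℝ))) / 2
            = -(Real.pi/2 - α * (u2 + v1 + 1/2 + (jj:ℝ)) / 2) by linear_combination (-1/2) * hαD,
          Real.sin_neg, Real.sin_pi_div_two_sub]
      have hcosshift : Real.cos (α * ((u1-v2-1/2+(M:ℝ)-(jj:ℝ))) / 2)
          = Real.sin (α * (u2 + v2 + 1/2 + (jj:ℝ)) / 2) := by
        rw [show α * ((u1-v2-1/2+(M:ℝ)-(jj:ℝ))) / 2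
            = Real.pi/2 - α * (u2 + v2 + 1/2 + (jj:ℝ)) / 2 by linear_combination (1/2) * hαD,
          Real.cos_pi_div_two_sub]
      have e1 : c/(a * qp (-(jj:ℝ))) = qp ((v1-u1+1/2-(M:ℝ)+(jj:ℝ))) := by
        rw [hcdef, hadef, hqpmul, hqpdiv]
        exact hqparg (by ring)
      have e2 : a * qp (-(jj:ℝ)) / e = -qp ((u1-v2-1/2+(M:ℝ)-(jj:ℝ))) := by
        rw [hadef, hedef, hqpmul, div_neg, hqpdiv]
        exact congrArg Neg.neg (hqparg (by ring))
      have e3 : c / qp (-(jj:ℝ)) = qp ((u1+v1+1/2+(jj:ℝ))) := by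
        rw [hcdef, hqpdiv]
        exact hqparg (by ring)
      have e4 : qp (-(jj:ℝ)) / e = -qp ((-(u1+v2+1/2+(jj:ℝ)))) := by
        rw [hedef, div_neg, hqpdiv]
        exact congrArg Neg.neg (hqparg (by ring))
      have hA : (1:ℂ) - c/(a * qp (-(jj:ℝ)))
          = 2 * Complex.I * ((Real.cos (α * (u2 + v1 + 1/2 + (jj:ℝ)) / 2) : ℝ):ℂ)
            * qp ((v1-u1+1/2-(M:ℝ)+(jj:ℝ))/2) := by
        rw [e1, hsub, hsinshift]
        push_cast
        ring
      have hB : (1:ℂ) - a * qp (-(jj:ℝ)) / e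
          = 2 * ((Real.sin (α * (u2 + v2 + 1/2 + (jj:ℝ)) / 2) : ℝ):ℂ)
            * qp ((u1-v2-1/2+(M:ℝ)-(jj:ℝ))/2) := by
        rw [e2, sub_neg_eq_add, hadd, hcosshift]
      have hC : (1:ℂ) - c / qp (-(jj:ℝ))
          = -2 * Complex.I * ((Real.sin (α * (u1 + v1 + 1/2 + (jj:ℝ)) / 2) : ℝ):ℂ)
            * qp ((u1+v1+1/2+(jj:ℝ))/2) := by
        rw [e3, hsub]
      have hD2 : (1:ℂ) - qp (-(jj:ℝ)) / e
          = 2 * ((Real.cos (α * (u1 + v2 + 1/2 + (jj:ℝ)) / 2) : ℝ):ℂ)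
            * qp ((-(u1+v2+1/2+(jj:ℝ)))/2) := by
        rw [e4, sub_neg_eq_add, hadd,
          show α * (-(u1+v2+1/2+(jj:ℝ))) / 2 = -(α * (u1 + v2 + 1/2 + (jj:ℝ)) / 2) by ring,
          Real.cos_neg]
      have hph : qp ((v1-u1+1/2-(M:ℝ)+(jj:ℝ))/2) * qp ((u1-v2-1/2+(M:ℝ)-(jj:ℝ))/2)
          = qp ((u1+v1+1/2+(jj:ℝ))/2) * qp ((-(u1+v2+1/2+(jj:ℝ)))/2) := by
        rw [hqpmul, hqpmul]
        exact hqparg (by ring)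
      have htau : tauv a c e (qp (-(jj:ℝ)))
          = -((((Real.sin (α * (u2 + v2 + 1/2 + (jj:ℝ)) / 2) / Real.sin (α * (u1 + v1 + 1/2 + (jj:ℝ)) / 2)) *
              (Real.cos (α * (u2 + v1 + 1/2 + (jj:ℝ)) / 2) / Real.cos (α * (u1 + v2 + 1/2 + (jj:ℝ)) / 2))
                : ℝ)) : ℂ) := by
        rw [tauv, hA, hB, hC, hD2]
        rw [show (2 * Complex.I * ((Real.cos (α * (u2 + v1 + 1/2 + (jj:ℝ)) / 2) : ℝ):ℂ)
              * qp ((v1-u1+1/2-(M:ℝ)+(jj:ℝ))/2))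
            * (2 * ((Real.sin (α * (u2 + v2 + 1/2 + (jj:ℝ)) / 2) : ℝ):ℂ)
              * qp ((u1-v2-1/2+(M:ℝ)-(jj:ℝ))/2))
            = (4 * Complex.I * ((Real.cos (α * (u2 + v1 + 1/2 + (jj:ℝ)) / 2) : ℝ):ℂ)
                * ((Real.sin (α * (u2 + v2 + 1/2 + (jj:ℝ)) / 2) : ℝ):ℂ))
              * (qp ((v1-u1+1/2-(M:ℝ)+(jj:ℝ))/2) * qp ((u1-v2-1/2+(M:ℝ)-(jj:ℝ))/2)) by ring,
          show (-2 * Complex.I * ((Real.sin (α * (u1 + v1 + 1/2 + (jj:ℝ)) / 2) : ℝ):ℂ)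
              * qp ((u1+v1+1/2+(jj:ℝ))/2))
            * (2 * ((Real.cos (α * (u1 + v2 + 1/2 + (jj:ℝ)) / 2) : ℝ):ℂ)
              * qp ((-(u1+v2+1/2+(jj:ℝ)))/2))
            = (-4 * Complex.I * ((Real.sin (α * (u1 + v1 + 1/2 + (jj:ℝ)) / 2) : ℝ):ℂ)
                * ((Real.cos (α * (u1 + v2 + 1/2 + (jj:ℝ)) / 2) : ℝ):ℂ))
              * (qp ((u1+v1+1/2+(jj:ℝ))/2) * qp ((-(u1+v2+1/2+(jj:ℝ)))/2)) by ring,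
          hph, mul_div_mul_right _ _ (mul_ne_zero (hqpne _) (hqpne _))]
        exact ratio_eq _ _ _ _ hS1pos.ne' hB1pos.ne'
      have hsum : (∑ n ∈ Finset.range (M+1),
            tterm q a c e (qp (-((jj+1:ℕ):ℝ))) (qp (u1+u2+v1+v2+((jj+1:ℕ):ℝ))) n)
          = tauv a c e (qp (-(jj:ℝ)))
            * (∑ n ∈ Finset.range (M+1),
                tterm q a c e (qp (-(jj:ℝ))) (qp (u1+u2+v1+v2+(jj:ℝ))) n) := by
        rw [hxarg, hyarg]
        rw [Finset.sum_congr rfl (fun n hn => step q a c e (qp (-(jj:ℝ))) hqne hane hsne hene hcne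
          hscne hsene n (hPq n (by have := Finset.mem_range.mp hn; omega))
          (hPc n (by have := Finset.mem_range.mp hn; omega))
          (hPe n (by have := Finset.mem_range.mp hn; omega)))]
        simp only [add_sub_assoc]
        rw [Finset.sum_add_distrib, ← Finset.mul_sum,
          Finset.sum_range_sub' (fun i => gterm q a c e (qp (-(jj:ℝ))) (e*c/(a*q)) i) (M+1)]
        simp only [hyarg0]
        rw [gterm_zero, hg0]
        ring
      rw [hsum, ih (by omega), htau]
      rw [Finset.prod_range_succ, pow_succ]
      push_cast
      ring
  have hXeq : -qp (u1 + u2) = qp (-(M:ℝ)) := by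
    have h := hflip (-(M:ℝ))
    rw [show (-(M:ℝ) + (u1 + u2 + (M:ℝ))) = u1 + u2 by ring] at h
    linear_combination -h
  have hconv : ∀ n ∈ Finset.range (M+1),
      qPoch (qp (-(M:ℝ))) q n * qPoch a q n * qPoch (qp (-(j:ℝ))) q n *
          qPoch (qp (u1+u2+v1+v2+(j:ℝ))) q n * q^n /
        (qPoch q q n * qPoch (-qp (u1 + u2)) q n * qPoch c q n * qPoch e q n)
      = tterm q a c e (qp (-(j:ℝ))) (qp (u1+u2+v1+v2+(j:ℝ))) n := by
    intro n hn
    rw [hXeq]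
    rw [show qPoch (qp (-(M:ℝ))) q n * qPoch a q n * qPoch (qp (-(j:ℝ))) q n *
          qPoch (qp (u1+u2+v1+v2+(j:ℝ))) q n * q^n
        = (qPoch a q n * qPoch (qp (-(j:ℝ))) q n * qPoch (qp (u1+u2+v1+v2+(j:ℝ))) q n * q^n) *
            qPoch (qp (-(M:ℝ))) q n by ring,
      show qPoch q q n * qPoch (qp (-(M:ℝ))) q n * qPoch c q n * qPoch e q n
        = (qPoch q q n * qPoch c q n * qPoch e q n) * qPoch (qp (-(M:ℝ))) q n by ring,
      mul_div_mul_right _ _ (hPX n (by have := Finset.mem_range.mp hn; omega))]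
    rfl
  rw [Finset.sum_congr rfl hconv]
  exact main j hj
end
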